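/- Let κ, p, q, α ∈ ℝ and let P be analytic on the open unit disk 𝔻, with derivative P′. Write φ_α(z) = (1−z)^α (principal branch). Then for every (z₁, z₂) ∈ 𝔻 × 𝔻, 𝒫(D)[(w₁,w₂) ↦ φ_α(w₁) φ_α(w₂) P(w₁w₂)](z₁,z₂) = z₁z₂ (1−z₁)^{α−1} (1−z₂)^{α−1} ( κα² P(z₁z₂) − 2(1 − z₁z₂) P′(z₁z₂) ) + 𝒫(∂)[φ_α](z₁) · φ_α(z₂) P(z₁z₂) + 𝒫(∂)[φ_α](z₂) · φ_α(z₁) P(z₁z₂). -/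

import Mathlib

/-- The operator `L = z₁∂₁ − z₂∂₂` acting on functions of two complex variables. -/
noncomputable def opL (G : ℂ → ℂ → ℂ) : ℂ → ℂ → ℂ :=
  fun z₁ z₂ => z₁ * deriv (fun w => G w z₂) z₁ - z₂ * deriv (fun w => G z₁ w) z₂

/-- The two-variable Beliaev–Smirnov type operator `𝒫(D)` with parameters `κ, p, q`:
`𝒫(D)[G] = −(κ/2) L(L G) − ((1+z₁)/(1−z₁)) z₁∂₁G − ((1+z₂)/(1−z₂)) z₂∂₂G
  + (−p/(1−z₁)² − p/(1−z₂)² + q/(1−z₁) + q/(1−z₂) + 2p − 2q) G`. -/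
noncomputable def PD (κ p q : ℝ) (G : ℂ → ℂ → ℂ) (z₁ z₂ : ℂ) : ℂ :=
  -(κ / 2 : ℂ) * opL (opL G) z₁ z₂
    - ((1 + z₁) / (1 - z₁)) * (z₁ * deriv (fun w => G w z₂) z₁)
    - ((1 + z₂) / (1 - z₂)) * (z₂ * deriv (fun w => G z₁ w) z₂)
    + (-(p : ℂ) / (1 - z₁) ^ 2 - (p : ℂ) / (1 - z₂) ^ 2
        + (q : ℂ) / (1 - z₁) + (q : ℂ) / (1 - z₂) + 2 * (p : ℂ) - 2 * (q : ℂ)) * G z₁ z₂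

/-- The one-variable Beliaev–Smirnov type operator `𝒫(∂)` with parameters `κ, p, q`:
`𝒫(∂)[G](z) = −(κ/2)(z G′(z) + z² G″(z)) − ((1+z)/(1−z)) z G′(z)
  + (−p/(1−z)² + q/(1−z) + p − q) G(z)`. -/
noncomputable def Pd (κ p q : ℝ) (G : ℂ → ℂ) (z : ℂ) : ℂ :=
  -(κ / 2 : ℂ) * (z * deriv G z + z ^ 2 * deriv (deriv G) z)
    - ((1 + z) / (1 - z)) * (z * deriv G z)
    + (-(p : ℂ) / (1 - z) ^ 2 + (q : ℂ) / (1 - z) + (p : ℂ) - (q : ℂ)) * G z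

/-!
Since `L = z₁∂₁ − z₂∂₂` kills every function of `z₁z₂`, both applications of `L` in `𝒫(D)` only
see the factor `f(z₁) g(z₂)`, on which `L² = θ² ⊗ 1 − 2 θ ⊗ θ + 1 ⊗ θ²` with `θ = z d/dz`
(`eulerOp`). The diagonal parts, the drift acting on `f ⊗ g` and the potential assemble into
`𝒫(∂)` in each variable. What remains is the cross term `κ θf ⊗ θg · P(z₁z₂)`, where
`θφ_α(z) = −αz(1−z)^{α−1}`, and the drift acting on `P(z₁z₂)`, where
`(1+z₁)/(1−z₁) + (1+z₂)/(1−z₂) = 2(1−z₁z₂)/((1−z₁)(1−z₂))`.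
-/

open Complex Metric

noncomputable def eulerOp (f : ℂ → ℂ) (z : ℂ) : ℂ := z * deriv f z

lemma eulerOp_eulerOp {f : ℂ → ℂ} {z : ℂ} (hf : DifferentiableAt ℂ (deriv f) z) :
    eulerOp (eulerOp f) z = z * deriv f z + z ^ 2 * deriv (deriv f) z := by
  have h : HasDerivAt (eulerOp f) (1 * deriv f z + z * deriv (deriv f) z) z :=
    (hasDerivAt_id' z).mul hf.hasDerivAt
  rw [eulerOp, h.deriv]
  ring

lemma DifferentiableOn.eulerOp {U : Set ℂ} {f : ℂ → ℂ} (hf : DifferentiableOn ℂ f U)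
    (hU : IsOpen U) : DifferentiableOn ℂ (eulerOp f) U :=
  differentiableOn_id.mul (hf.deriv hU)

lemma opL_congr {U : Set ℂ} (hU : IsOpen U) {G G' : ℂ → ℂ → ℂ}
    (h : ∀ w₁ ∈ U, ∀ w₂ ∈ U, G w₁ w₂ = G' w₁ w₂) {z₁ z₂ : ℂ} (hz₁ : z₁ ∈ U) (hz₂ : z₂ ∈ U) :
    opL G z₁ z₂ = opL G' z₁ z₂ := by
  have h₁ : (fun w => G w z₂) =ᶠ[nhds z₁] fun w => G' w z₂ := by
    filter_upwards [hU.mem_nhds hz₁] with w hw using h w hw z₂ hz₂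
  have h₂ : (fun w => G z₁ w) =ᶠ[nhds z₂] fun w => G' z₁ w := by
    filter_upwards [hU.mem_nhds hz₂] with w hw using h z₁ hz₁ w hw
  simp only [opL, h₁.deriv_eq, h₂.deriv_eq]

lemma opL_mul_tensor (f g : ℂ → ℂ) (z₁ z₂ : ℂ) :
    opL (fun w₁ w₂ => f w₁ * g w₂) z₁ z₂ = eulerOp f z₁ * g z₂ - f z₁ * eulerOp g z₂ := by
  simp only [opL, eulerOp, deriv_mul_const_field, deriv_const_mul_field]
  ring

lemma opL_sub_mul_tensor {a b c d : ℂ → ℂ} {z₁ z₂ : ℂ}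
    (ha : DifferentiableAt ℂ a z₁) (hb : DifferentiableAt ℂ b z₂)
    (hc : DifferentiableAt ℂ c z₁) (hd : DifferentiableAt ℂ d z₂) :
    opL (fun w₁ w₂ => a w₁ * b w₂ - c w₁ * d w₂) z₁ z₂
      = eulerOp a z₁ * b z₂ - a z₁ * eulerOp b z₂
        - (eulerOp c z₁ * d z₂ - c z₁ * eulerOp d z₂) := by
  have h₁ : HasDerivAt (fun w => a w * b z₂ - c w * d z₂)
      (deriv a z₁ * b z₂ - deriv c z₁ * d z₂) z₁ :=
    (ha.hasDerivAt.mul_const (b z₂)).sub (hc.hasDerivAt.mul_const (d z₂))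
  have h₂ : HasDerivAt (fun w => a z₁ * b w - c z₁ * d w)
      (a z₁ * deriv b z₂ - c z₁ * deriv d z₂) z₂ :=
    (hb.hasDerivAt.const_mul (a z₁)).sub (hd.hasDerivAt.const_mul (c z₁))
  rw [opL, h₁.deriv, h₂.deriv, eulerOp, eulerOp, eulerOp, eulerOp]
  ring

section CompMul

variable {H : ℂ → ℂ → ℂ} {P : ℂ → ℂ} {z₁ z₂ : ℂ}

lemma deriv_fst_mul_comp_mul (hH : DifferentiableAt ℂ (fun w => H w z₂) z₁)
    (hP : DifferentiableAt ℂ P (z₁ * z₂)) :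
    deriv (fun w => H w z₂ * P (w * z₂)) z₁
      = deriv (fun w => H w z₂) z₁ * P (z₁ * z₂) + H z₁ z₂ * (z₂ * deriv P (z₁ * z₂)) := by
  have h : HasDerivAt (fun w => H w z₂ * P (w * z₂))
      (deriv (fun w => H w z₂) z₁ * P (z₁ * z₂) + H z₁ z₂ * (deriv P (z₁ * z₂) * z₂)) z₁ :=
    hH.hasDerivAt.mul (hP.hasDerivAt.comp z₁ (hasDerivAt_mul_const z₂))
  rw [h.deriv]
  ring

lemma deriv_snd_mul_comp_mul (hH : DifferentiableAt ℂ (H z₁) z₂)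
    (hP : DifferentiableAt ℂ P (z₁ * z₂)) :
    deriv (fun w => H z₁ w * P (z₁ * w)) z₂
      = deriv (H z₁) z₂ * P (z₁ * z₂) + H z₁ z₂ * (z₁ * deriv P (z₁ * z₂)) := by
  have h : HasDerivAt (fun w => H z₁ w * P (z₁ * w))
      (deriv (H z₁) z₂ * P (z₁ * z₂) + H z₁ z₂ * (deriv P (z₁ * z₂) * z₁)) z₂ :=
    hH.hasDerivAt.mul (hP.hasDerivAt.comp z₂ (hasDerivAt_const_mul z₁))
  rw [h.deriv]
  ring

lemma opL_mul_comp_mul (h₁ : DifferentiableAt ℂ (fun w => H w z₂) z₁)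
    (h₂ : DifferentiableAt ℂ (H z₁) z₂) (hP : DifferentiableAt ℂ P (z₁ * z₂)) :
    opL (fun w₁ w₂ => H w₁ w₂ * P (w₁ * w₂)) z₁ z₂ = opL H z₁ z₂ * P (z₁ * z₂) := by
  simp only [opL, deriv_fst_mul_comp_mul h₁ hP, deriv_snd_mul_comp_mul h₂ hP]
  ring

end CompMul

section Factorized

variable {U : Set ℂ} {f g P : ℂ → ℂ} {z₁ z₂ : ℂ}

lemma opL_tensor_mul_comp_mul (hf : DifferentiableAt ℂ f z₁) (hg : DifferentiableAt ℂ g z₂)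
    (hP : DifferentiableAt ℂ P (z₁ * z₂)) :
    opL (fun w₁ w₂ => f w₁ * g w₂ * P (w₁ * w₂)) z₁ z₂
      = (eulerOp f z₁ * g z₂ - f z₁ * eulerOp g z₂) * P (z₁ * z₂) := by
  rw [opL_mul_comp_mul (H := fun w₁ w₂ => f w₁ * g w₂) (hf.mul_const _) (hg.const_mul _) hP,
    opL_mul_tensor]

lemma opL_opL_tensor_mul_comp_mul (hU : IsOpen U) (hf : DifferentiableOn ℂ f U)
    (hg : DifferentiableOn ℂ g U) (hP : ∀ w₁ ∈ U, ∀ w₂ ∈ U, DifferentiableAt ℂ P (w₁ * w₂))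
    (hz₁ : z₁ ∈ U) (hz₂ : z₂ ∈ U) :
    opL (opL (fun w₁ w₂ => f w₁ * g w₂ * P (w₁ * w₂))) z₁ z₂
      = (eulerOp (eulerOp f) z₁ * g z₂ - 2 * (eulerOp f z₁ * eulerOp g z₂)
          + f z₁ * eulerOp (eulerOp g) z₂) * P (z₁ * z₂) := by
  have hd {h : ℂ → ℂ} (hh : DifferentiableOn ℂ h U) {w : ℂ} (hw : w ∈ U) :
      DifferentiableAt ℂ h w := hh.differentiableAt (hU.mem_nhds hw)
  have hθf := hf.eulerOp hU
  have hθg := hg.eulerOp hU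
  rw [opL_congr hU (fun w₁ h₁ w₂ h₂ => opL_tensor_mul_comp_mul (hd hf h₁) (hd hg h₂)
      (hP w₁ h₁ w₂ h₂)) hz₁ hz₂,
    opL_mul_comp_mul (H := fun w₁ w₂ => eulerOp f w₁ * g w₂ - f w₁ * eulerOp g w₂)
      (((hd hθf hz₁).mul_const _).sub ((hd hf hz₁).mul_const _))
      (((hd hg hz₂).const_mul _).sub ((hd hθg hz₂).const_mul _)) (hP z₁ hz₁ z₂ hz₂),
    opL_sub_mul_tensor (hd hθf hz₁) (hd hg hz₂) (hd hf hz₁) (hd hθg hz₂)]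
  ring

lemma PD_tensor_mul_comp_mul (κ p q : ℝ) (hU : IsOpen U) (hf : DifferentiableOn ℂ f U)
    (hg : DifferentiableOn ℂ g U) (hP : ∀ w₁ ∈ U, ∀ w₂ ∈ U, DifferentiableAt ℂ P (w₁ * w₂))
    (hz₁ : z₁ ∈ U) (hz₂ : z₂ ∈ U) :
    PD κ p q (fun w₁ w₂ => f w₁ * g w₂ * P (w₁ * w₂)) z₁ z₂
      = κ * eulerOp f z₁ * eulerOp g z₂ * P (z₁ * z₂)
        - ((1 + z₁) / (1 - z₁) + (1 + z₂) / (1 - z₂)) * (z₁ * z₂ * deriv P (z₁ * z₂))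
          * (f z₁ * g z₂)
        + Pd κ p q f z₁ * (g z₂ * P (z₁ * z₂)) + Pd κ p q g z₂ * (f z₁ * P (z₁ * z₂)) := by
  have hP₁₂ := hP z₁ hz₁ z₂ hz₂
  have h₁ := deriv_fst_mul_comp_mul (H := fun w₁ w₂ => f w₁ * g w₂)
    ((hf.differentiableAt (hU.mem_nhds hz₁)).mul_const (g z₂)) hP₁₂
  have h₂ := deriv_snd_mul_comp_mul (H := fun w₁ w₂ => f w₁ * g w₂)
    ((hg.differentiableAt (hU.mem_nhds hz₂)).const_mul (f z₁)) hP₁₂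
  simp only [deriv_mul_const_field, deriv_const_mul_field] at h₁ h₂
  simp only [PD, Pd, h₁, h₂]
  rw [opL_opL_tensor_mul_comp_mul hU hf hg hP hz₁ hz₂,
    eulerOp_eulerOp ((hf.deriv hU).differentiableAt (hU.mem_nhds hz₁)),
    eulerOp_eulerOp ((hg.deriv hU).differentiableAt (hU.mem_nhds hz₂))]
  simp only [eulerOp]
  ring

end Factorized

lemma one_sub_mem_slitPlane {z : ℂ} (hz : z ∈ ball (0 : ℂ) 1) : 1 - z ∈ slitPlane := by
  rw [sub_eq_add_neg]
  exact mem_slitPlane_of_norm_lt_one (by simpa using hz)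

lemma mul_mem_ball_zero_one {z₁ z₂ : ℂ} (h₁ : z₁ ∈ ball (0 : ℂ) 1) (h₂ : z₂ ∈ ball (0 : ℂ) 1) :
    z₁ * z₂ ∈ ball (0 : ℂ) 1 := by
  rw [mem_ball_zero_iff, norm_mul] at *
  exact mul_lt_one_of_nonneg_of_lt_one_left (norm_nonneg _) h₁ h₂.le

lemma hasDerivAt_one_sub_cpow (β : ℂ) {z : ℂ} (hz : 1 - z ∈ slitPlane) :
    HasDerivAt (fun w => (1 - w) ^ β) (-β * (1 - z) ^ (β - 1)) z := by
  convert ((hasDerivAt_id' z).const_sub 1).cpow_const (c := β) hz using 1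
  ring

lemma eulerOp_one_sub_cpow (β : ℂ) {z : ℂ} (hz : 1 - z ∈ slitPlane) :
    eulerOp (fun w => (1 - w) ^ β) z = -β * z * (1 - z) ^ (β - 1) := by
  rw [eulerOp, (hasDerivAt_one_sub_cpow β hz).deriv]
  ring

lemma one_add_div_one_sub_add {a b : ℂ} (ha : 1 - a ≠ 0) (hb : 1 - b ≠ 0) :
    (1 + a) / (1 - a) + (1 + b) / (1 - b) = 2 * (1 - a * b) / ((1 - a) * (1 - b)) := by
  field_simp
  ring

lemma one_sub_cpow_eq_cpow_sub_one_mul (β : ℂ) {z : ℂ} (hz : 1 - z ≠ 0) :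
    (1 - z) ^ β = (1 - z) ^ (β - 1) * (1 - z) := by
  rw [cpow_sub _ _ hz, cpow_one, div_mul_cancel₀ _ hz]

/-- Action of the two-variable operator `𝒫(D)` on factorized functions
`φ_α(z₁) φ_α(z₂) P(z₁z₂)`, where `φ_α(z) = (1−z)^α` (principal branch) and `P` is
analytic on the unit disk. -/
theorem PD_on_factorized_function (κ p q α : ℝ) (P : ℂ → ℂ)
    (hP : AnalyticOnNhd ℂ P (Metric.ball (0:ℂ) 1)) :
    ∀ z₁ ∈ Metric.ball (0:ℂ) 1, ∀ z₂ ∈ Metric.ball (0:ℂ) 1,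
      PD κ p q (fun w₁ w₂ => (1 - w₁) ^ (α : ℂ) * (1 - w₂) ^ (α : ℂ) * P (w₁ * w₂)) z₁ z₂
        = z₁ * z₂ * (1 - z₁) ^ ((α : ℂ) - 1) * (1 - z₂) ^ ((α : ℂ) - 1) *
            ((κ : ℂ) * (α : ℂ) ^ 2 * P (z₁ * z₂)
              - 2 * (1 - z₁ * z₂) * deriv P (z₁ * z₂))
          + Pd κ p q (fun w => (1 - w) ^ (α : ℂ)) z₁ * ((1 - z₂) ^ (α : ℂ) * P (z₁ * z₂))
          + Pd κ p q (fun w => (1 - w) ^ (α : ℂ)) z₂ * ((1 - z₁) ^ (α : ℂ) * P (z₁ * z₂)) := by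
  intro z₁ hz₁ z₂ hz₂
  have hφ : DifferentiableOn ℂ (fun w : ℂ => (1 - w) ^ (α : ℂ)) (ball 0 1) := fun w hw =>
    (hasDerivAt_one_sub_cpow _ (one_sub_mem_slitPlane hw)).differentiableAt.differentiableWithinAt
  have hs₁ := one_sub_mem_slitPlane hz₁
  have hs₂ := one_sub_mem_slitPlane hz₂
  have hne₁ := slitPlane_ne_zero hs₁
  have hne₂ := slitPlane_ne_zero hs₂
  rw [PD_tensor_mul_comp_mul κ p q isOpen_ball hφ hφ
      (fun w₁ h₁ w₂ h₂ => (hP _ (mul_mem_ball_zero_one h₁ h₂)).differentiableAt) hz₁ hz₂,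
    eulerOp_one_sub_cpow _ hs₁, eulerOp_one_sub_cpow _ hs₂, one_add_div_one_sub_add hne₁ hne₂,
    one_sub_cpow_eq_cpow_sub_one_mul (α : ℂ) hne₁,
    one_sub_cpow_eq_cpow_sub_one_mul (α : ℂ) hne₂]
  field_simp
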